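/- Let K be a field of characteristic 0. Every nonconstant polynomial Q ∈ K[X] admits a shiftless decomposition: there exist c ∈ K, an integer v ≥ 1, monic squarefree nonconstant polynomials Q_1,…,Q_v ∈ K[X], integers n_i ≥ 1, integers h_{i,1},…,h_{i,n_i} ∈ ℤ and positive integers e_{i,j} such that Q = c · ∏_{i=1}^v ∏_{j=1}^{n_i} Q_i(X+h_{i,j})^{e_{i,j}}, and gcd(Q_i(X+k), Q_j(X)) = 1 for all i, j ∈ {1,…,v} and all k ∈ ℤ except when i = j and k = 0. -/

import Mathlib

open Polynomial

private lemma aux_comp_comp {A : Type*} [CommRing A] (p : Polynomial A) (a b : A) :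
    (p.comp (X + C a)).comp (X + C b) = p.comp (X + C (a + b)) := by
  rw [comp_assoc]
  congr 1
  rw [add_comp, X_comp, C_comp, add_assoc, ← C_add, add_comm b a]

/-- The shift-equivalence setoid on `K[X]`. -/
def shiftSetoid (K : Type*) [Field K] : Setoid (Polynomial K) :=
  ⟨fun p q => ∃ k : ℤ, q = p.comp (X + C (k : K)),
   fun p => ⟨0, by simp⟩,
   by
     rintro p q ⟨k, rfl⟩
     exact ⟨-k, by rw [aux_comp_comp]; push_cast; simp⟩,
   by
     rintro p q r ⟨k, rfl⟩ ⟨l, rfl⟩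
     exact ⟨k + l, by rw [aux_comp_comp]; push_cast; ring_nf⟩⟩

section Aux

variable {K : Type*} [Field K]

private lemma comp_X_add_C_self_eq [CharZero K] {p : Polynomial K} (hp : 0 < p.natDegree)
    {a : K} (h : p.comp (X + C a) = p) : a = 0 := by
  by_contra ha
  set L := AlgebraicClosure K
  set φ := algebraMap K L with hφ
  have hp0 : p ≠ 0 := fun h0 => by simp [h0] at hp
  set P := p.map φ with hP
  have hPne : P ≠ 0 := Polynomial.map_ne_zero hp0
  have hdeg : P.degree ≠ 0 := by
    rw [degree_map]
    intro h0
    rw [Polynomial.natDegree_eq_zero_iff_degree_le_zero.2 h0.le] at hp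
    exact lt_irrefl 0 hp
  have hcomp : P.comp (X + C (φ a)) = P := by
    have : (X + C a).map φ = X + C (φ a) := by simp
    rw [← this, ← Polynomial.map_comp, h]
  obtain ⟨z, hz⟩ := IsAlgClosed.exists_root P hdeg
  have key : ∀ m : ℕ, P.IsRoot (z + m * φ a) := by
    intro m
    induction m with
    | zero => simpa using hz
    | succ m ih =>
      have he : z + (m + 1 : ℕ) * φ a = (z + m * φ a) + φ a := by push_cast; ring
      rw [he]
      have := congrArg (Polynomial.eval (z + m * φ a)) hcomp
      rw [eval_comp] at this
      simp only [eval_add, eval_X, eval_C] at this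
      exact this.trans ih
  have haφ : φ a ≠ 0 := by
    simpa using (map_ne_zero_iff φ (algebraMap K L).injective).mpr ha
  have hinj : Function.Injective (fun m : ℕ => z + m * φ a) := by
    intro m₁ m₂ hm
    simp only [add_right_inj] at hm
    exact_mod_cast mul_right_cancel₀ haφ hm
  exact (finite_setOf_isRoot hPne).not_infinite
    (Set.infinite_of_injective_forall_mem hinj key)

private lemma irr_comp {p : Polynomial K} (hp : Irreducible p) (a : K) :
    Irreducible (p.comp (X + C a)) := by
  have : p.comp (X + C a) = (algEquivAevalXAddC a) p := by
    simp [algEquivAevalXAddC_apply, ← comp_eq_aeval]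
  rw [this]
  exact (MulEquiv.irreducible_iff
    ((algEquivAevalXAddC a : Polynomial K ≃ₐ[K] Polynomial K) :
      Polynomial K ≃* Polynomial K)).2 hp

private lemma coprime_or_eq {p q : Polynomial K} (hp : Irreducible p) (hq : Irreducible q)
    (hpm : p.Monic) (hqm : q.Monic) : IsCoprime p q ∨ p = q := by
  rcases hp.isCoprime_or_dvd q with hc | hd
  · exact Or.inl hc
  · exact Or.inr (eq_of_monic_of_associated hpm hqm (hp.associated_of_dvd hq hd))

end Aux

theorem shiftless_decomposition_exists (K : Type*) [Field K] [CharZero K]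
    (Q : Polynomial K) (hQ : 0 < Q.natDegree) :
    ∃ (c : K) (v : ℕ) (Qf : Fin v → Polynomial K)
      (n : Fin v → ℕ) (h : (i : Fin v) → Fin (n i) → ℤ)
      (e : (i : Fin v) → Fin (n i) → ℕ),
      1 ≤ v ∧
      (∀ i, (Qf i).Monic) ∧
      (∀ i, Squarefree (Qf i)) ∧
      (∀ i, 0 < (Qf i).natDegree) ∧
      (∀ i, 1 ≤ n i) ∧
      (∀ i j, 1 ≤ e i j) ∧
      Q = C c * ∏ i, ∏ j, ((Qf i).comp (X + C ((h i j : ℤ) : K))) ^ (e i j) ∧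
      (∀ i j : Fin v, ∀ k : ℤ, ¬(i = j ∧ k = 0) →
        IsCoprime ((Qf i).comp (X + C (k : K))) (Qf j)) := by
  classical
  have hQ0 : Q ≠ 0 := fun h0 => by simp [h0] at hQ
  have hlc : Q.leadingCoeff ≠ 0 := leadingCoeff_ne_zero.2 hQ0
  set M := Q * C Q.leadingCoeff⁻¹ with hM
  have hMmonic : M.Monic := monic_mul_leadingCoeff_inv hQ0
  have hQM : Q = C Q.leadingCoeff * M := by
    rw [hM, ← mul_assoc, mul_comm (C Q.leadingCoeff) Q, mul_assoc, ← C_mul,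
      mul_inv_cancel₀ hlc, map_one, mul_one]
  have hMdeg : 0 < M.natDegree := by
    rw [hM, natDegree_mul hQ0 (by simpa using inv_ne_zero hlc), natDegree_C, add_zero]
    exact hQ
  -- factor M
  set F := UniqueFactorizationMonoid.normalizedFactors M with hF
  have hFirr : ∀ p ∈ F, Irreducible p := fun p hp =>
    UniqueFactorizationMonoid.irreducible_of_normalized_factor p hp
  have hFmonic : ∀ p ∈ F, Monic p := fun p hp => by
    have h1 := UniqueFactorizationMonoid.normalize_normalized_factor p hp
    rw [← h1]
    exact monic_normalize (hFirr p hp).ne_zero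
  have hFprod : F.prod = M := by
    have hass := UniqueFactorizationMonoid.prod_normalizedFactors hMmonic.ne_zero
    exact eq_of_monic_of_associated
      (by simpa using monic_multiset_prod_of_monic F id (fun p hp => hFmonic p hp))
      hMmonic hass
  -- representative function
  set R : Polynomial K → Polynomial K :=
    fun p => (Quotient.mk (shiftSetoid K) p).out with hRdef
  have hRrel : ∀ p, ∃ k : ℤ, p = (R p).comp (X + C (k : K)) :=
    fun p => Quotient.mk_out (s := shiftSetoid K) p
  have hReq : ∀ p q : Polynomial K, (∃ k : ℤ, q = p.comp (X + C (k : K))) → R p = R q := by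
    intro p q hpq
    have : Quotient.mk (shiftSetoid K) p = Quotient.mk (shiftSetoid K) q :=
      Quotient.sound hpq
    simp only [hRdef, this]
  have hRR : ∀ p, R (R p) = R p := fun p => hReq (R p) p (hRrel p)
  have hRrel' : ∀ p, ∃ k : ℤ, R p = p.comp (X + C (k : K)) := fun p =>
    (shiftSetoid K).symm (hRrel p)
  set T := F.toFinset with hT
  have hTmonic : ∀ p ∈ T, Monic p := fun p hp => hFmonic p (Multiset.mem_toFinset.1 hp)
  have hTirr : ∀ p ∈ T, Irreducible p := fun p hp => hFirr p (Multiset.mem_toFinset.1 hp)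
  have hTne : T.Nonempty := by
    rw [Finset.nonempty_iff_ne_empty, Ne, hT, Multiset.toFinset_eq_empty]
    intro h0
    rw [h0, Multiset.prod_zero] at hFprod
    rw [← hFprod, natDegree_one] at hMdeg
    exact lt_irrefl 0 hMdeg
  set V := T.image R with hV
  have hVne : V.Nonempty := hTne.image R
  set v := V.card with hv
  set ε : Fin v → Polynomial K := fun i => (V.equivFin.symm i : Polynomial K) with hε
  have hεmem : ∀ i, ε i ∈ V := fun i => (V.equivFin.symm i).2
  have hεinj : Function.Injective ε := fun i j hij =>
    V.equivFin.symm.injective (Subtype.ext hij)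
  have hRfix : ∀ y ∈ V, R y = y := by
    intro y hy
    obtain ⟨p, _, rfl⟩ := Finset.mem_image.1 hy
    exact hRR p
  -- ε i is monic and irreducible
  have hεprops : ∀ i, Monic (ε i) ∧ Irreducible (ε i) := by
    intro i
    obtain ⟨p, hpT, hpε⟩ := Finset.mem_image.1 (hεmem i)
    obtain ⟨k, hk⟩ := hRrel' p
    rw [hpε] at hk
    rw [hk]
    exact ⟨(hTmonic p hpT).comp_X_add_C _, irr_comp (hTirr p hpT) _⟩
  have hεmonic : ∀ i, Monic (ε i) := fun i => (hεprops i).1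
  have hεirr : ∀ i, Irreducible (ε i) := fun i => (hεprops i).2
  have hεdeg : ∀ i, 0 < (ε i).natDegree := fun i => (hεirr i).natDegree_pos
  -- fibers
  set Ti : Fin v → Finset (Polynomial K) := fun i => T.filter (fun p => R p = ε i) with hTi
  set n : Fin v → ℕ := fun i => (Ti i).card with hn
  set π : (i : Fin v) → Fin (n i) → Polynomial K :=
    fun i j => ((Ti i).equivFin.symm j : Polynomial K) with hπ
  have hπmem : ∀ i j, π i j ∈ Ti i := fun i j => ((Ti i).equivFin.symm j).2
  have hπT : ∀ i j, π i j ∈ T := fun i j => (Finset.mem_filter.1 (hπmem i j)).1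
  have hπR : ∀ i j, R (π i j) = ε i := fun i j => (Finset.mem_filter.1 (hπmem i j)).2
  have hπex : ∀ i j, ∃ k : ℤ, π i j = (ε i).comp (X + C (k : K)) := by
    intro i j
    have := hRrel (π i j)
    rwa [hπR i j] at this
  refine ⟨Q.leadingCoeff, v, ε, n, fun i j => (hπex i j).choose,
    fun i j => F.count (π i j), Finset.card_pos.2 hVne, hεmonic,
    fun i => (hεirr i).squarefree, hεdeg, ?_, ?_, ?_, ?_⟩
  · -- n i ≥ 1
    intro i
    obtain ⟨p, hpT, hpε⟩ := Finset.mem_image.1 (hεmem i)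
    exact Finset.card_pos.2 ⟨p, Finset.mem_filter.2 ⟨hpT, hpε⟩⟩
  · -- e i j ≥ 1
    intro i j
    exact Multiset.one_le_count_iff_mem.2 (Multiset.mem_toFinset.1 (hπT i j))
  · -- product formula
    conv_lhs => rw [hQM]
    refine congrArg (fun x => C Q.leadingCoeff * x) ?_
    have step2 : ∀ i : Fin v,
        (∏ j, ((ε i).comp (X + C (((hπex i j).choose : ℤ) : K))) ^ F.count (π i j))
          = ∏ p ∈ Ti i, p ^ F.count p := by
      intro i
      have e1 : (∏ j, ((ε i).comp (X + C (((hπex i j).choose : ℤ) : K))) ^ F.count (π i j))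
          = ∏ j, (π i j) ^ F.count (π i j) :=
        Finset.prod_congr rfl (fun j _ => by rw [← (hπex i j).choose_spec])
      rw [e1, ← Finset.prod_coe_sort (Ti i) (fun p => p ^ F.count p)]
      exact Equiv.prod_comp (Ti i).equivFin.symm
        (fun p : {x // x ∈ Ti i} => (p : Polynomial K) ^ F.count (p : Polynomial K))
    calc M = F.prod := hFprod.symm
      _ = ∏ p ∈ T, p ^ F.count p := Finset.prod_multiset_count F
      _ = ∏ y ∈ V, ∏ p ∈ T.filter (fun p => R p = y), p ^ F.count p :=
          (Finset.prod_fiberwise_of_maps_to (fun p hp => Finset.mem_image_of_mem R hp) _).symm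
      _ = ∏ y : {x // x ∈ V}, ∏ p ∈ T.filter (fun p => R p = (y : Polynomial K)), p ^ F.count p :=
          (Finset.prod_coe_sort _ _).symm
      _ = ∏ i : Fin v, ∏ p ∈ Ti i, p ^ F.count p :=
          (Equiv.prod_comp V.equivFin.symm
            (fun y : {x // x ∈ V} =>
              ∏ p ∈ T.filter (fun p => R p = (y : Polynomial K)), p ^ F.count p)).symm
      _ = ∏ i, ∏ j, ((ε i).comp (X + C (((hπex i j).choose : ℤ) : K))) ^ F.count (π i j) :=
          Finset.prod_congr rfl (fun i _ => (step2 i).symm)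
  · -- coprimality
    intro i j k hk
    have hA : Irreducible ((ε i).comp (X + C (k : K))) := irr_comp (hεirr i) _
    have hAm : Monic ((ε i).comp (X + C (k : K))) := (hεmonic i).comp_X_add_C _
    rcases coprime_or_eq hA (hεirr j) hAm (hεmonic j) with hc | heq
    · exact hc
    · exfalso
      have hij : ε i = ε j := by
        have h1 : R (ε i) = R (ε j) := hReq _ _ ⟨k, heq.symm⟩
        rwa [hRfix _ (hεmem i), hRfix _ (hεmem j)] at h1
      have hij' : i = j := hεinj hij
      subst hij'
      rw [← hij] at heq
      have hk0 : (k : K) = 0 := comp_X_add_C_self_eq (hεdeg i) heq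
      exact hk ⟨rfl, by exact_mod_cast hk0⟩
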